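/- arXiv:1709.03685 — 4 statements merged into one kernel-verified Lean document; each statement's English description precedes it below -/
import Mathlib

section
/- For every nonempty finite chain c of searches, the set γ⁰(c) of indexes associated to c is nonempty: there exists a nonempty duplicate-free list ℓ whose element set equals the maximal element of c and which covers every search in c. -/
variable {A : Type*} [DecidableEq A]

/-- An index `ℓ` covers a search `s` if the first `|s|` elements of `ℓ` are
exactly the elements of `s`. -/
def Covers (ℓ : List A) (s : Finset A) : Prop :=
  (ℓ.take s.card).toFinset = s

/-!
Order the chain by cardinality and build the index greedily: once a list covering the
smaller searches has been built, append the missing elements of the next search `m` in any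
order. Appending never changes a prefix that is already there, and the new list has exactly
`|m|` elements, so it covers `m` as well.
-/

theorem Covers.card_le_length {ℓ : List A} {s : Finset A} (h : Covers ℓ s) :
    s.card ≤ ℓ.length :=
  calc s.card = (ℓ.take s.card).toFinset.card := by rw [h]
    _ ≤ (ℓ.take s.card).length := List.toFinset_card_le _
    _ ≤ ℓ.length := List.length_take_le' _ _

theorem Covers.append {ℓ : List A} {s : Finset A} (h : Covers ℓ s) (t : List A) :
    Covers (ℓ ++ t) s := by
  rw [Covers, List.take_append_of_le_length h.card_le_length]
  exact h

theorem List.Nodup.covers_toFinset {ℓ : List A} (h : ℓ.Nodup) : Covers ℓ ℓ.toFinset := by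
  rw [Covers, List.toFinset_card_of_nodup h, List.take_length]

theorem List.Nodup.append_toList_sdiff {ℓ : List A} (h : ℓ.Nodup) (m : Finset A) :
    (ℓ ++ (m \ ℓ.toFinset).toList).Nodup := by
  refine List.nodup_append.2 ⟨h, Finset.nodup_toList _, ?_⟩
  rintro a ha _ hb rfl
  simp_all

theorem List.toFinset_append_toList_sdiff {ℓ : List A} {m : Finset A} (h : ℓ.toFinset ⊆ m) :
    (ℓ ++ (m \ ℓ.toFinset).toList).toFinset = m := by
  rw [List.toFinset_append, Finset.toList_toFinset, Finset.union_sdiff_of_subset h]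

theorem IsChain.finsetSup_mem {α : Type*} [SemilatticeSup α] [OrderBot α] {c : Finset α}
    (hc : IsChain (· ≤ ·) (c : Set α)) (hne : c.Nonempty) : c.sup id ∈ c := by
  refine SupClosed.finsetSup_mem (fun a ha b hb ↦ ?_) hne fun _ h ↦ h
  rcases hc.total ha hb with h | h
  · rwa [sup_of_le_right h]
  · rwa [sup_of_le_left h]

theorem IsChain.exists_nodup_covers {c : Finset (Finset A)}
    (hc : IsChain (· ⊆ ·) (c : Set (Finset A))) :
    ∃ ℓ : List A, ℓ.Nodup ∧ ℓ.toFinset = c.sup id ∧ ∀ s ∈ c, Covers ℓ s := by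
  revert hc
  refine Finset.induction_on_max_value Finset.card c (fun _ ↦ ⟨[], List.nodup_nil, rfl, by simp⟩)
    fun m c _ hcard ih hc ↦ ?_
  have hsub : ∀ s ∈ c, s ⊆ m := fun s hs ↦ by
    rcases hc.total (Finset.mem_coe.2 (Finset.mem_insert_of_mem hs))
      (Finset.mem_coe.2 (Finset.mem_insert_self m c)) with h | h
    · exact h
    · exact (Finset.eq_of_subset_of_card_le h (hcard s hs)).ge
  obtain ⟨ℓ, hnodup, hℓ, hcov⟩ := ih (hc.mono (by simp))
  have hsup : c.sup id ⊆ m := Finset.sup_le hsub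
  have hnew := List.toFinset_append_toList_sdiff (hℓ ▸ hsup)
  refine ⟨ℓ ++ (m \ ℓ.toFinset).toList, hnodup.append_toList_sdiff m, ?_, ?_⟩
  · rw [hnew, Finset.sup_insert, id, sup_of_le_left hsup]
  · rintro s hs
    rcases Finset.mem_insert.1 hs with rfl | hs
    · simpa only [hnew] using (hnodup.append_toList_sdiff s).covers_toFinset
    · exact (hcov s hs).append _

/-- **γ⁰ is nonempty on nonempty chains.**
For every nonempty finite chain `c` of searches (nonempty finite subsets of
`A`, totally ordered by strict inclusion), there exists a nonempty
duplicate-free list `ℓ` whose element set equals the maximal element of `c`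
and which covers every search in `c`. -/
theorem gamma0_nonempty (c : Finset (Finset A)) (hc : c.Nonempty)
    (hsne : ∀ s ∈ c, s.Nonempty)
    (hchain : IsChain (· ⊂ ·) (c : Set (Finset A))) :
    ∃ ℓ : List A, ℓ ≠ [] ∧ ℓ.Nodup ∧
      (ℓ.toFinset ∈ c ∧ ∀ s ∈ c, s ⊆ ℓ.toFinset) ∧
      ∀ s ∈ c, Covers ℓ s := by
  have hchain' : IsChain (· ⊆ ·) (c : Set (Finset A)) :=
    hchain.mono_rel fun _ _ h ↦ h.subset
  obtain ⟨ℓ, hnodup, hℓ, hcov⟩ := hchain'.exists_nodup_covers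
  have hmem : ℓ.toFinset ∈ c := hℓ ▸ hchain'.finsetSup_mem hc
  refine ⟨ℓ, ?_, hnodup, ⟨hmem, fun s hs ↦ hℓ ▸ Finset.le_sup (f := id) hs⟩, hcov⟩
  rintro rfl
  exact Finset.not_nonempty_empty (hsne _ hmem)
end

section
/- If L is a minimum l-cover of S, then the image α¹(L) has the same cardinality as L, i.e. |α¹(L)| = |L| (α preserves the cardinality of optimal index sets). -/
variable {A : Type*} [DecidableEq A]

instance (ℓ : List A) (s : Finset A) : Decidable (Covers ℓ s) := by
  unfold Covers; infer_instance

/-- `α⁰(ℓ)`: the finite set of searches in `S` covered by the index `ℓ`. -/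
def Alpha0 (S : Finset (Finset A)) (ℓ : List A) : Finset (Finset A) :=
  S.filter fun s => Covers ℓ s

/-! Two indexes of `L` with the same `α⁰` cover the same searches of `S`, so one of them could be
dropped from `L`, contradicting minimality. Hence `α⁰` is injective on `L`. -/

theorem Covers.of_alpha0_eq {S : Finset (Finset A)} {ℓ ℓ' : List A} {s : Finset A}
    (h : Alpha0 S ℓ = Alpha0 S ℓ') (hs : s ∈ S) (hc : Covers ℓ' s) : Covers ℓ s :=
  (Finset.mem_filter.mp (h ▸ Finset.mem_filter.mpr ⟨hs, hc⟩ : s ∈ Alpha0 S ℓ)).2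

theorem exists_covers_erase_of_alpha0_eq {S : Finset (Finset A)} {L : Finset (List A)}
    {ℓ ℓ' : List A} (hL : ∀ s ∈ S, ∃ m ∈ L, Covers m s) (hℓ : ℓ ∈ L) (hne : ℓ ≠ ℓ')
    (h : Alpha0 S ℓ = Alpha0 S ℓ') : ∀ s ∈ S, ∃ m ∈ L.erase ℓ', Covers m s := by
  intro s hs
  obtain ⟨m, hm, hc⟩ := hL s hs
  by_cases hm' : m = ℓ'
  · exact ⟨ℓ, Finset.mem_erase.mpr ⟨hne, hℓ⟩, (hm' ▸ hc).of_alpha0_eq h hs⟩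
  · exact ⟨m, Finset.mem_erase.mpr ⟨hm', hm⟩, hc⟩

theorem alpha1_card_of_minimum_lCover_general (S : Finset (Finset A))
    (L : Finset (List A))
    (hLidx : ∀ ℓ ∈ L, ℓ ≠ [] ∧ ℓ.Nodup)
    (hLcover : ∀ s ∈ S, ∃ ℓ ∈ L, Covers ℓ s)
    (hLmin : ∀ L' : Finset (List A), (∀ ℓ ∈ L', ℓ ≠ [] ∧ ℓ.Nodup) →
      (∀ s ∈ S, ∃ ℓ ∈ L', Covers ℓ s) → L.card ≤ L'.card) :
    (L.image (Alpha0 S)).card = L.card := by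
  refine Finset.card_image_of_injOn fun a ha b hb hab => ?_
  by_contra hne
  have hle := hLmin (L.erase b) (fun ℓ hℓ => hLidx ℓ (Finset.mem_of_mem_erase hℓ))
    (exists_covers_erase_of_alpha0_eq hLcover ha hne hab)
  exact (Finset.card_erase_lt_of_mem hb).not_ge hle

/-- **α preserves the cardinality of optimal index sets.**
If `L` is a minimum l-cover of `S` (a finite set of indexes covering every
search in `S`, of minimal cardinality among all such finite l-covers), then
the image `α¹(L) = {α⁰(ℓ) | ℓ ∈ L}` has the same cardinality as `L`. -/
theorem alpha1_card_of_minimum_lCover (S : Finset (Finset A))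
    (hS : ∀ s ∈ S, s.Nonempty) (L : Finset (List A))
    (hLidx : ∀ ℓ ∈ L, ℓ ≠ [] ∧ ℓ.Nodup)
    (hLcover : ∀ s ∈ S, ∃ ℓ ∈ L, Covers ℓ s)
    (hLmin : ∀ L' : Finset (List A), (∀ ℓ ∈ L', ℓ ≠ [] ∧ ℓ.Nodup) →
      (∀ s ∈ S, ∃ ℓ ∈ L', Covers ℓ s) → L.card ≤ L'.card) :
    (L.image (Alpha0 S)).card = L.card :=
  alpha1_card_of_minimum_lCover_general S L hLidx hLcover hLmin
end

section
/- Solution preservation of γ: if C is a minimum c-cover of S consisting of nonempty chains of searches in S, then every index set L ∈ γ¹(C) is a minimum l-cover of S. -/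
variable {A : Type*} [DecidableEq A]

/-- `γ⁰(c)`: the set of indexes whose element set is exactly the maximal
element of the chain `c` and which cover every search in `c`. -/
def Gamma0 (c : Finset (Finset A)) : Set (List A) :=
  {ℓ | ℓ ≠ [] ∧ ℓ.Nodup ∧ (ℓ.toFinset ∈ c ∧ ∀ s ∈ c, s ⊆ ℓ.toFinset) ∧
    ∀ s ∈ c, Covers ℓ s}

/-!
The searches covered by a single index are prefixes of one list, hence nested: every index
covers a chain. So an l-cover `L'` of `S` yields a c-cover `{{s ∈ S | ℓ covers s} | ℓ ∈ L'}` by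
at most `|L'|` chains, while an index set chosen from `γ¹(C)` is an l-cover with at most `|C|`
indexes. Minimality of `C` then gives `|L| ≤ |C| ≤ |L'|`.
-/

theorem Covers.subset_of_card_le {ℓ : List A} {s t : Finset A} (hs : Covers ℓ s)
    (ht : Covers ℓ t) (hst : s.card ≤ t.card) : s ⊆ t := by
  rw [← hs, ← ht]
  intro a
  simpa using fun ha => List.take_subset_take_left ℓ hst ha

theorem isChain_covers (ℓ : List A) : IsChain (· ⊂ ·) {s | Covers ℓ s} := by
  intro s hs t ht hne
  rcases le_total s.card t.card with hst | hts
  · exact Or.inl ((hs.subset_of_card_le ht hst).ssubset_of_ne hne)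
  · exact Or.inr ((ht.subset_of_card_le hs hts).ssubset_of_ne hne.symm)

theorem exists_chainCover_card_le {S : Finset (Finset A)} (hS : ∀ s ∈ S, s.Nonempty)
    {L : Finset (List A)} (hL : ∀ s ∈ S, ∃ ℓ ∈ L, Covers ℓ s) :
    ∃ C : Finset (Finset (Finset A)),
      (∀ c ∈ C, (∀ s ∈ c, s.Nonempty) ∧ IsChain (· ⊂ ·) (c : Set (Finset A))) ∧
      (∀ s ∈ S, ∃ c ∈ C, s ∈ c) ∧ C.card ≤ L.card := by
  classical
  refine ⟨L.image fun ℓ => {s ∈ S | Covers ℓ s}, ?_, ?_, Finset.card_image_le⟩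
  · simp only [Finset.mem_image, forall_exists_index, and_imp]
    rintro _ ℓ - rfl
    exact ⟨fun s hs => hS s (Finset.mem_filter.mp hs).1,
      (isChain_covers ℓ).mono fun s hs => (Finset.mem_filter.mp hs).2⟩
  · intro s hs
    obtain ⟨ℓ, hℓ, hcov⟩ := hL s hs
    exact ⟨_, Finset.mem_image_of_mem _ hℓ, Finset.mem_filter.mpr ⟨hs, hcov⟩⟩

theorem gamma1_minimum_lCover_general (S : Finset (Finset A))
    (hS : ∀ s ∈ S, s.Nonempty) (C : Finset (Finset (Finset A)))
    (hCcover : ∀ s ∈ S, ∃ c ∈ C, s ∈ c)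
    (hCmin : ∀ C' : Finset (Finset (Finset A)),
      (∀ c ∈ C', (∀ s ∈ c, s.Nonempty) ∧ IsChain (· ⊂ ·) (c : Set (Finset A))) →
      (∀ s ∈ S, ∃ c ∈ C', s ∈ c) → C.card ≤ C'.card) :
    ∀ L : Finset (List A), ∀ f : Finset (Finset A) → List A,
      (∀ c ∈ C, f c ∈ Gamma0 c) → L = C.image f →
      (∀ s ∈ S, ∃ ℓ ∈ L, Covers ℓ s) ∧
      (∀ L' : Finset (List A), (∀ ℓ ∈ L', ℓ ≠ [] ∧ ℓ.Nodup) →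
        (∀ s ∈ S, ∃ ℓ ∈ L', Covers ℓ s) → L.card ≤ L'.card) := by
  rintro L f hf rfl
  refine ⟨fun s hs => ?_, fun L' _ hL' => ?_⟩
  · obtain ⟨c, hc, hsc⟩ := hCcover s hs
    exact ⟨f c, Finset.mem_image_of_mem f hc, (hf c hc).2.2.2 s hsc⟩
  · obtain ⟨C', hC'chains, hC'cover, hC'card⟩ := exists_chainCover_card_le hS hL'
    calc (C.image f).card ≤ C.card := Finset.card_image_le
      _ ≤ C'.card := hCmin C' hC'chains hC'cover
      _ ≤ L'.card := hC'card

/-- **Solution preservation of γ.**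
If `C` is a minimum c-cover of `S` consisting of nonempty chains of searches
in `S` (a finite c-cover of `S` by chains, of minimal cardinality among all
such finite c-covers by chains), then every index set `L ∈ γ¹(C)` (i.e. every
`L = {f(c) | c ∈ C}` for a choice function `f` with `f(c) ∈ γ⁰(c)`) is a
minimum l-cover of `S`. -/
theorem gamma1_minimum_lCover (S : Finset (Finset A))
    (hS : ∀ s ∈ S, s.Nonempty) (C : Finset (Finset (Finset A)))
    (hC : ∀ c ∈ C, (c : Finset (Finset A)).Nonempty ∧ (∀ s ∈ c, s ∈ S) ∧
      IsChain (· ⊂ ·) (c : Set (Finset A)))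
    (hCcover : ∀ s ∈ S, ∃ c ∈ C, s ∈ c)
    (hCmin : ∀ C' : Finset (Finset (Finset A)),
      (∀ c ∈ C', (∀ s ∈ c, s.Nonempty) ∧ IsChain (· ⊂ ·) (c : Set (Finset A))) →
      (∀ s ∈ S, ∃ c ∈ C', s ∈ c) → C.card ≤ C'.card) :
    ∀ L : Finset (List A), ∀ f : Finset (Finset A) → List A,
      (∀ c ∈ C, f c ∈ Gamma0 c) → L = C.image f →
      (∀ s ∈ S, ∃ ℓ ∈ L, Covers ℓ s) ∧
      (∀ L' : Finset (List A), (∀ ℓ ∈ L', ℓ ≠ [] ∧ ℓ.Nodup) →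
        (∀ s ∈ S, ∃ ℓ ∈ L', Covers ℓ s) → L.card ≤ L'.card) :=
  gamma1_minimum_lCover_general S hS C hCcover hCmin
end

section
/- Range search cover: let D be a linear order with a least element ⊥ and a greatest element ⊤, let m be a natural number, and let ℓ be a duplicate-free list of attributes in Fin m of length p. Fix k ≤ p and values v : Fin m → D. Define a, b : Fin m → D by a(i) = v(i) and b(i) = v(i) if i is among the first k elements of ℓ, and a(i) = ⊥, b(i) = ⊤ otherwise. Let ≼ be the lexicographic order along ℓ, i.e. t ≼ t' iff the list (ℓ.map t) is ≤ the list (ℓ.map t') in the lexicographic order on lists over D. Then for every set R of tuples t : Fin m → D, the primitive search {t ∈ R | t(x) = v(x) for every attribute x among the first k elements of ℓ} equals the range search {t ∈ R | a ≼ t and t ≼ b}. -/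
/-!
If `t` agrees with `v` on the first `k` attributes of `ℓ`, then `a ≤ t ≤ b` pointwise
along `ℓ`, hence lexicographically. Conversely, `ℓ.map a` and `ℓ.map b` both start with the
word `(ℓ.take k).map v`, and in the lexicographic order any list lying between two lists with a
common prefix `c` has `c` as a prefix itself; so `t` agrees with `v` on `ℓ.take k`.
-/

namespace List

variable {α β γ : Type*}

section LinearOrder

variable [LinearOrder α]

/- Mathlib's `LinearOrder (List α)` replaces core's `≤` on lists by a relation that is only
propositionally equal to it, so core's `List.cons_le_cons_iff` does not apply as it stands. -/
theorem cons_le_cons_iff' {a b : α} {l l' : List α} :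
    a :: l ≤ b :: l' ↔ a < b ∨ a = b ∧ l ≤ l' := by
  simp only [← not_lt]
  exact cons_le_cons_iff

theorem map_le_map_of_forall_mem_le {f g : β → α} :
    ∀ {l : List β}, (∀ x ∈ l, f x ≤ g x) → l.map f ≤ l.map g
  | [], _ => le_rfl
  | x :: _, h => cons_le_cons_iff'.2 <| (h x mem_cons_self).lt_or_eq.imp_right fun hx =>
      ⟨hx, map_le_map_of_forall_mem_le fun y hy => h y (mem_cons_of_mem x hy)⟩

theorem prefix_of_append_le_of_le_append :
    ∀ {c l₁ l l₂ : List α}, c ++ l₁ ≤ l → l ≤ c ++ l₂ → c <+: l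
  | [], _, _, _, _, _ => nil_prefix
  | _ :: _, _, [], _, h₁, _ => absurd h₁ (not_le_of_gt (nil_lt_cons _ _))
  | x :: c, _, y :: l, _, h₁, h₂ => by
    rw [cons_append, cons_le_cons_iff'] at h₁ h₂
    obtain ⟨rfl, hc₁⟩ := h₁.resolve_left fun hxy =>
      h₂.elim (lt_asymm hxy) fun h => hxy.ne' h.1
    have hc₂ := (h₂.resolve_left (lt_irrefl x)).2
    exact cons_prefix_cons.2 ⟨rfl, prefix_of_append_le_of_le_append hc₁ hc₂⟩

end LinearOrder

theorem map_eq_map_take_append_map_drop {f g : β → γ} (l : List β) (k : ℕ)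
    (h : ∀ x ∈ l.take k, f x = g x) : l.map f = (l.take k).map g ++ (l.drop k).map f := by
  rw [← map_congr_left h, ← map_append, take_append_drop]

theorem forall_mem_take_eq_of_map_take_prefix {f g : β → γ} {l : List β} {k : ℕ}
    (h : (l.take k).map g <+: l.map f) : ∀ x ∈ l.take k, f x = g x := by
  have hf : (l.take k).map f <+: l.map f := map_take ▸ take_prefix k _
  exact map_inj_left.1 ((prefix_of_prefix_length_le hf h (by simp)).eq_of_length (by simp))

end List

theorem range_search_cover_general (D : Type*) [LinearOrder D] [OrderBot D] [OrderTop D]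
    (m : ℕ) (ℓ : List (Fin m))
    (k : ℕ) (v : Fin m → D) (a b : Fin m → D)
    (ha : ∀ i : Fin m, a i = if i ∈ ℓ.take k then v i else ⊥)
    (hb : ∀ i : Fin m, b i = if i ∈ ℓ.take k then v i else ⊤)
    (R : Set (Fin m → D)) :
    {t ∈ R | ∀ x ∈ ℓ.take k, t x = v x} =
      {t ∈ R | ℓ.map a ≤ ℓ.map t ∧ ℓ.map t ≤ ℓ.map b} := by
  ext t
  refine and_congr_right fun _ => ⟨fun htv => ⟨?_, ?_⟩, fun ⟨hat, htb⟩ => ?_⟩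
  · refine List.map_le_map_of_forall_mem_le fun x _ => ?_
    rw [ha x]
    split_ifs with hx
    exacts [(htv x hx).ge, bot_le]
  · refine List.map_le_map_of_forall_mem_le fun x _ => ?_
    rw [hb x]
    split_ifs with hx
    exacts [(htv x hx).le, le_top]
  · rw [List.map_eq_map_take_append_map_drop (f := a) ℓ k fun x hx => by
      rw [ha x, if_pos hx]] at hat
    rw [List.map_eq_map_take_append_map_drop (f := b) ℓ k fun x hx => by
      rw [hb x, if_pos hx]] at htb
    exact List.forall_mem_take_eq_of_map_take_prefix
      (List.prefix_of_append_le_of_le_append hat htb)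

/-- **Range search cover.**
Let `D` be a linear order with a least element `⊥` and a greatest element `⊤`,
`m` a natural number, and `ℓ` a duplicate-free list of attributes in `Fin m`
of length `p`. Fix `k ≤ p` and values `v : Fin m → D`. Define the bounds
`a, b : Fin m → D` by `a i = v i = b i` if `i` is among the first `k` elements
of `ℓ`, and `a i = ⊥`, `b i = ⊤` otherwise. Comparing tuples `t, t'` by
comparing `ℓ.map t` and `ℓ.map t'` in the lexicographic order on lists, for
every set `R` of tuples the primitive search
`{t ∈ R | t x = v x for all x among the first k elements of ℓ}` equals the
range search `{t ∈ R | a ≼ t ∧ t ≼ b}`. -/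
theorem range_search_cover (D : Type*) [LinearOrder D] [OrderBot D] [OrderTop D]
    (m : ℕ) (ℓ : List (Fin m)) (hnd : ℓ.Nodup) (p : ℕ) (hp : ℓ.length = p)
    (k : ℕ) (hk : k ≤ p) (v : Fin m → D) (a b : Fin m → D)
    (ha : ∀ i : Fin m, a i = if i ∈ ℓ.take k then v i else ⊥)
    (hb : ∀ i : Fin m, b i = if i ∈ ℓ.take k then v i else ⊤)
    (R : Set (Fin m → D)) :
    {t ∈ R | ∀ x ∈ ℓ.take k, t x = v x} =
      {t ∈ R | ℓ.map a ≤ ℓ.map t ∧ ℓ.map t ≤ ℓ.map b} :=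
  range_search_cover_general D m ℓ k v a b ha hb R
end
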